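/- In 𝒱, for all integers x, y and all nonnegative integers β₁,…,β₆ one has k₁^x k₂^y X₁^{β₁}X₂^{β₂}X₃^{β₃}X₄^{β₄}X₅^{β₅}X₆^{β₆} = r^{F} s^{G} X₁^{β₁}X₂^{β₂}X₃^{β₃}X₄^{β₄}X₅^{β₅}X₆^{β₆} k₁^x k₂^y, where F = x(3β₁+2β₂+3β₃+β₄−β₆) + y(6β₁+3β₂+3β₃−3β₅−3β₆) and G = x(3β₁+β₂−β₄−3β₅−2β₆) + y(3β₁−3β₃−3β₄−6β₅−3β₆). -/

import Mathlib

noncomputable section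

open scoped TensorProduct

/-- Generators of the algebra `𝒱 = Ǔ_{r,s}^{≥0}(G₂)`. -/
inductive VGen : Type
  | e1 | e2 | k1 | k1' | k2 | k2'

open FreeAlgebra in
/-- Defining relations of `𝒱 = Ǔ_{r,s}^{≥0}(G₂)`. -/
inductive VRel (r s : ℂ) : FreeAlgebra ℂ VGen → FreeAlgebra ℂ VGen → Prop
  | k1inv : VRel r s (ι ℂ VGen.k1 * ι ℂ VGen.k1') 1
  | k1inv' : VRel r s (ι ℂ VGen.k1' * ι ℂ VGen.k1) 1
  | k2inv : VRel r s (ι ℂ VGen.k2 * ι ℂ VGen.k2') 1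
  | k2inv' : VRel r s (ι ℂ VGen.k2' * ι ℂ VGen.k2) 1
  | kcomm : VRel r s (ι ℂ VGen.k1 * ι ℂ VGen.k2) (ι ℂ VGen.k2 * ι ℂ VGen.k1)
  | k1e1 : VRel r s (ι ℂ VGen.k1 * ι ℂ VGen.e1)
      ((r⁻¹ * s⁻¹ ^ 2) • (ι ℂ VGen.e1 * ι ℂ VGen.k1))
  | k1e2 : VRel r s (ι ℂ VGen.k1 * ι ℂ VGen.e2)
      ((r ^ 3 * s ^ 3) • (ι ℂ VGen.e2 * ι ℂ VGen.k1))
  | k2e1 : VRel r s (ι ℂ VGen.k2 * ι ℂ VGen.e1)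
      ((r⁻¹ ^ 3 * s⁻¹ ^ 3) • (ι ℂ VGen.e1 * ι ℂ VGen.k2))
  | k2e2 : VRel r s (ι ℂ VGen.k2 * ι ℂ VGen.e2)
      ((r ^ 6 * s ^ 3) • (ι ℂ VGen.e2 * ι ℂ VGen.k2))
  | serre1 : VRel r s
      (ι ℂ VGen.e2 ^ 2 * ι ℂ VGen.e1
        - (r⁻¹ ^ 3 + s⁻¹ ^ 3) • (ι ℂ VGen.e2 * ι ℂ VGen.e1 * ι ℂ VGen.e2)
        + (r⁻¹ ^ 3 * s⁻¹ ^ 3) • (ι ℂ VGen.e1 * ι ℂ VGen.e2 ^ 2)) 0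
  | serre2 : VRel r s
      (ι ℂ VGen.e1 ^ 4 * ι ℂ VGen.e2
        - ((r + s) * (r ^ 2 + s ^ 2)) • (ι ℂ VGen.e1 ^ 3 * ι ℂ VGen.e2 * ι ℂ VGen.e1)
        + (r * s * (r ^ 2 + r * s + s ^ 2)) •
            (ι ℂ VGen.e1 ^ 2 * ι ℂ VGen.e2 * ι ℂ VGen.e1 ^ 2)
        - (r ^ 3 * s ^ 3 * (r + s) * (r ^ 2 + s ^ 2)) •
            (ι ℂ VGen.e1 * ι ℂ VGen.e2 * ι ℂ VGen.e1 ^ 3)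
        + (r ^ 6 * s ^ 6) • (ι ℂ VGen.e2 * ι ℂ VGen.e1 ^ 4)) 0

/-- The two-parameter Hopf algebra `𝒱 = Ǔ_{r,s}^{≥0}(G₂)` as a quotient of the free algebra. -/
def V (r s : ℂ) : Type := RingQuot (VRel r s)

instance (r s : ℂ) : Ring (V r s) := inferInstanceAs (Ring (RingQuot (VRel r s)))
instance (r s : ℂ) : Algebra ℂ (V r s) := inferInstanceAs (Algebra ℂ (RingQuot (VRel r s)))

namespace V

variable (r s : ℂ)

/-- The image of a generator in `𝒱`. -/
def gen (g : VGen) : V r s := RingQuot.mkAlgHom ℂ (VRel r s) (FreeAlgebra.ι ℂ g)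

def e1 : V r s := gen r s VGen.e1
def e2 : V r s := gen r s VGen.e2

/-- `k₁` as a unit of `𝒱`. -/
def K1 : (V r s)ˣ where
  val := gen r s VGen.k1
  inv := gen r s VGen.k1'
  val_inv := by
    have h := RingQuot.mkAlgHom_rel ℂ (VRel.k1inv (r := r) (s := s))
    simp only [map_mul, map_one] at h
    exact h
  inv_val := by
    have h := RingQuot.mkAlgHom_rel ℂ (VRel.k1inv' (r := r) (s := s))
    simp only [map_mul, map_one] at h
    exact h

/-- `k₂` as a unit of `𝒱`. -/
def K2 : (V r s)ˣ where
  val := gen r s VGen.k2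
  inv := gen r s VGen.k2'
  val_inv := by
    have h := RingQuot.mkAlgHom_rel ℂ (VRel.k2inv (r := r) (s := s))
    simp only [map_mul, map_one] at h
    exact h
  inv_val := by
    have h := RingQuot.mkAlgHom_rel ℂ (VRel.k2inv' (r := r) (s := s))
    simp only [map_mul, map_one] at h
    exact h

/-- `k₁` as an element of `𝒱`. -/
def k1 : V r s := (K1 r s : V r s)

/-- `k₂` as an element of `𝒱`. -/
def k2 : V r s := (K2 r s : V r s)

/-- The element `k₁^m k₂^n` of `𝒱`, for integers `m n`. -/
def kk (m n : ℤ) : V r s := ((K1 r s ^ m * K2 r s ^ n : (V r s)ˣ) : V r s)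

/-- The PBW generators `X₁, …, X₆`. -/
def X1 : V r s := e2 r s
def X6 : V r s := e1 r s
def X2 : V r s := e1 r s * e2 r s - s ^ 3 • (e2 r s * e1 r s)
def X4 : V r s := e1 r s * X2 r s - (r * s ^ 2) • (X2 r s * e1 r s)
def X5 : V r s := e1 r s * X4 r s - (r ^ 2 * s) • (X4 r s * e1 r s)
def X3 : V r s := X4 r s * X2 r s - (r ^ 2 * s) • (X2 r s * X4 r s)

/-- The ordered monomial `X₁^a X₂^b X₃^c X₄^d X₅^e X₆^f`. -/
def Xmon (a b c d e f : ℕ) : V r s :=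
  X1 r s ^ a * X2 r s ^ b * X3 r s ^ c * X4 r s ^ d * X5 r s ^ e * X6 r s ^ f

end V

/-! Conjugation by `k₁^x k₂^y` rescales `e₁` and `e₂` by monomials in `r, s`. Skew-commutation
with a fixed `k` is multiplicative in the other factor and survives `q`-commutators, so each
`Xᵢ` is rescaled by the monomial belonging to its root `α₂, α₁+α₂, 3α₁+2α₂, 2α₁+α₂, 3α₁+α₂, α₁`,
and an ordered monomial by the product of these. -/

def SkewCommute {𝕜 A : Type*} [Field 𝕜] [Ring A] [Algebra 𝕜 A] (c : 𝕜) (k a : A) : Prop :=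
  k * a = c • (a * k)

namespace SkewCommute

variable {𝕜 A : Type*} [Field 𝕜] [Ring A] [Algebra 𝕜 A] {c d : 𝕜} {k k' a b : A}

theorem mul_right (ha : SkewCommute c k a) (hb : SkewCommute d k b) :
    SkewCommute (c * d) k (a * b) := by
  unfold SkewCommute at *
  rw [← mul_assoc, ha, smul_mul_assoc, mul_assoc, hb, mul_smul_comm, smul_smul, mul_assoc]

theorem mul_left (h : SkewCommute c k a) (h' : SkewCommute d k' a) :
    SkewCommute (c * d) (k * k') a := by
  unfold SkewCommute at *
  rw [mul_assoc, h', mul_smul_comm, ← mul_assoc, h, smul_mul_assoc, smul_smul, mul_assoc,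
    mul_comm d c]

theorem mul_sub_smul_mul (ha : SkewCommute c k a) (hb : SkewCommute d k b) (q : 𝕜) :
    SkewCommute (c * d) k (a * b - q • (b * a)) := by
  have hab := ha.mul_right hb
  have hba : SkewCommute (c * d) k (b * a) := mul_comm d c ▸ hb.mul_right ha
  unfold SkewCommute at *
  rw [mul_sub, mul_smul_comm, hab, hba, sub_mul, smul_mul_assoc, smul_sub, smul_comm]

theorem pow_right (h : SkewCommute c k a) : ∀ n : ℕ, SkewCommute (c ^ n) k (a ^ n)
  | 0 => by simp [SkewCommute]
  | n + 1 => by rw [pow_succ, pow_succ]; exact (h.pow_right n).mul_right h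

theorem units_pow_left {K : Aˣ} (h : SkewCommute c (K : A) a) :
    ∀ n : ℕ, SkewCommute (c ^ n) ↑(K ^ n) a
  | 0 => by simp [SkewCommute]
  | n + 1 => by rw [pow_succ, pow_succ, Units.val_mul]; exact (h.units_pow_left n).mul_left h

theorem units_inv_left {K : Aˣ} (h : SkewCommute c (K : A) a) : SkewCommute c⁻¹ ↑K⁻¹ a := by
  unfold SkewCommute at *
  by_cases hc : c = 0
  · -- here `c⁻¹ = 0`, and `a = 0` because `K * a = 0`
    rw [hc, zero_smul, Units.mul_right_eq_zero] at h
    simp [h]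
  · have h' : a * ↑K⁻¹ = c • (↑K⁻¹ * a) := by
      simpa [mul_assoc, mul_smul_comm, smul_mul_assoc] using
        congrArg (fun x : A ↦ (↑K⁻¹ : A) * x * ↑K⁻¹) h
    rw [h', smul_smul, inv_mul_cancel₀ hc, one_smul]

theorem units_zpow_left {K : Aˣ} (h : SkewCommute c (K : A) a) :
    ∀ x : ℤ, SkewCommute (c ^ x) ↑(K ^ x) a
  | .ofNat n => by simpa using h.units_pow_left n
  | .negSucc n => by
    rw [zpow_negSucc, zpow_negSucc]
    exact (h.units_pow_left (n + 1)).units_inv_left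

end SkewCommute

namespace V

def rsPow (r s : ℂ) (m n : ℤ) : ℂ := r ^ m * s ^ n

variable {r s : ℂ}

theorem rsPow_mul_rsPow (hr : r ≠ 0) (hs : s ≠ 0) (m n m' n' : ℤ) :
    rsPow r s m n * rsPow r s m' n' = rsPow r s (m + m') (n + n') := by
  simp only [rsPow, zpow_add₀ hr, zpow_add₀ hs]; ring

theorem rsPow_zpow (m n x : ℤ) : rsPow r s m n ^ x = rsPow r s (m * x) (n * x) := by
  simp only [rsPow, mul_zpow, zpow_mul]

theorem rsPow_pow (m n : ℤ) (k : ℕ) : rsPow r s m n ^ k = rsPow r s (m * k) (n * k) := by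
  rw [← zpow_natCast, rsPow_zpow]

theorem skewCommute_gen {g g' : VGen} {c : ℂ}
    (h : VRel r s (FreeAlgebra.ι ℂ g * FreeAlgebra.ι ℂ g')
      (c • (FreeAlgebra.ι ℂ g' * FreeAlgebra.ι ℂ g))) :
    SkewCommute c (gen r s g) (gen r s g') := by
  have h' := RingQuot.mkAlgHom_rel ℂ h
  simp only [map_mul, map_smul] at h'
  exact h'

theorem k1_e1 : SkewCommute (rsPow r s (-1) (-2)) (k1 r s) (e1 r s) := by
  have h : SkewCommute (r⁻¹ * s⁻¹ ^ 2) (k1 r s) (e1 r s) := skewCommute_gen VRel.k1e1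
  simpa [rsPow, zpow_neg, inv_pow] using h

theorem k2_e1 : SkewCommute (rsPow r s (-3) (-3)) (k2 r s) (e1 r s) := by
  have h : SkewCommute (r⁻¹ ^ 3 * s⁻¹ ^ 3) (k2 r s) (e1 r s) := skewCommute_gen VRel.k2e1
  simpa [rsPow, zpow_neg, inv_pow] using h

theorem k1_e2 : SkewCommute (rsPow r s 3 3) (k1 r s) (e2 r s) := by
  have h : SkewCommute (r ^ 3 * s ^ 3) (k1 r s) (e2 r s) := skewCommute_gen VRel.k1e2
  simpa [rsPow] using h

theorem k2_e2 : SkewCommute (rsPow r s 6 3) (k2 r s) (e2 r s) := by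
  have h : SkewCommute (r ^ 6 * s ^ 3) (k2 r s) (e2 r s) := skewCommute_gen VRel.k2e2
  simpa [rsPow] using h

section

variable (hr : r ≠ 0) (hs : s ≠ 0)
include hr hs

theorem skewCommute_kk {a : V r s} {m n m' n' : ℤ}
    (h1 : SkewCommute (rsPow r s m n) (k1 r s) a) (h2 : SkewCommute (rsPow r s m' n') (k2 r s) a)
    (x y : ℤ) : SkewCommute (rsPow r s (m * x + m' * y) (n * x + n' * y)) (kk r s x y) a := by
  have h := (h1.units_zpow_left (K := K1 r s) x).mul_left (h2.units_zpow_left (K := K2 r s) y)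
  rwa [rsPow_zpow, rsPow_zpow, rsPow_mul_rsPow hr hs, ← Units.val_mul] at h

theorem skewCommute_mul_sub_smul_mul {k a b : V r s} {m n m' n' : ℤ}
    (ha : SkewCommute (rsPow r s m n) k a) (hb : SkewCommute (rsPow r s m' n') k b) (q : ℂ) :
    SkewCommute (rsPow r s (m + m') (n + n')) k (a * b - q • (b * a)) := by
  rw [← rsPow_mul_rsPow hr hs]
  exact ha.mul_sub_smul_mul hb q

theorem skewCommute_Xmon {k : V r s} {m₁ n₁ m₂ n₂ : ℤ}
    (h1 : SkewCommute (rsPow r s m₁ n₁) k (e1 r s)) (h2 : SkewCommute (rsPow r s m₂ n₂) k (e2 r s))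
    (b1 b2 b3 b4 b5 b6 : ℕ) :
    SkewCommute
      (rsPow r s
        (b1 * m₂ + b2 * (m₁ + m₂) + b3 * (3 * m₁ + 2 * m₂) + b4 * (2 * m₁ + m₂)
          + b5 * (3 * m₁ + m₂) + b6 * m₁)
        (b1 * n₂ + b2 * (n₁ + n₂) + b3 * (3 * n₁ + 2 * n₂) + b4 * (2 * n₁ + n₂)
          + b5 * (3 * n₁ + n₂) + b6 * n₁))
      k (Xmon r s b1 b2 b3 b4 b5 b6) := by
  have hX1 : SkewCommute _ k (X1 r s) := h2
  have hX6 : SkewCommute _ k (X6 r s) := h1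
  have hX2 : SkewCommute _ k (X2 r s) := skewCommute_mul_sub_smul_mul hr hs h1 h2 (s ^ 3)
  have hX4 : SkewCommute _ k (X4 r s) := skewCommute_mul_sub_smul_mul hr hs h1 hX2 (r * s ^ 2)
  have hX5 : SkewCommute _ k (X5 r s) := skewCommute_mul_sub_smul_mul hr hs h1 hX4 (r ^ 2 * s)
  have hX3 : SkewCommute _ k (X3 r s) := skewCommute_mul_sub_smul_mul hr hs hX4 hX2 (r ^ 2 * s)
  have h := (((((hX1.pow_right b1).mul_right (hX2.pow_right b2)).mul_right
    (hX3.pow_right b3)).mul_right (hX4.pow_right b4)).mul_right (hX5.pow_right b5)).mul_right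
    (hX6.pow_right b6)
  simp only [rsPow_pow, rsPow_mul_rsPow hr hs] at h
  rw [Xmon]
  convert h using 2 <;> ring

end

end V

theorem stmt5_general (r s : ℂ) (hr : r ≠ 0) (hs : s ≠ 0) :
    ∀ (x y : ℤ) (b1 b2 b3 b4 b5 b6 : ℕ),
      V.kk r s x y * V.Xmon r s b1 b2 b3 b4 b5 b6 =
        (r ^ (x * (3 * (b1 : ℤ) + 2 * b2 + 3 * b3 + b4 - b6)
              + y * (6 * (b1 : ℤ) + 3 * b2 + 3 * b3 - 3 * b5 - 3 * b6)) *
         s ^ (x * (3 * (b1 : ℤ) + b2 - b4 - 3 * b5 - 2 * b6)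
              + y * (3 * (b1 : ℤ) - 3 * b3 - 3 * b4 - 6 * b5 - 3 * b6))) •
          (V.Xmon r s b1 b2 b3 b4 b5 b6 * V.kk r s x y) := by
  intro x y b1 b2 b3 b4 b5 b6
  have h := V.skewCommute_Xmon hr hs (V.skewCommute_kk hr hs V.k1_e1 V.k2_e1 x y)
    (V.skewCommute_kk hr hs V.k1_e2 V.k2_e2 x y) b1 b2 b3 b4 b5 b6
  rw [h, V.rsPow]
  congr 3 <;> ring

theorem stmt5 (r s : ℂ) (hr : r ≠ 0) (hs : s ≠ 0)
    (hrs : ∀ m n : ℤ, r ^ m * s ^ n = 1 → m = 0 ∧ n = 0) :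
    ∀ (x y : ℤ) (b1 b2 b3 b4 b5 b6 : ℕ),
      V.kk r s x y * V.Xmon r s b1 b2 b3 b4 b5 b6 =
        (r ^ (x * (3 * (b1 : ℤ) + 2 * b2 + 3 * b3 + b4 - b6)
              + y * (6 * (b1 : ℤ) + 3 * b2 + 3 * b3 - 3 * b5 - 3 * b6)) *
         s ^ (x * (3 * (b1 : ℤ) + b2 - b4 - 3 * b5 - 2 * b6)
              + y * (3 * (b1 : ℤ) - 3 * b3 - 3 * b4 - 6 * b5 - 3 * b6))) •
          (V.Xmon r s b1 b2 b3 b4 b5 b6 * V.kk r s x y) :=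
  stmt5_general r s hr hs
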